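/- Let (O,*,n) be an Okubo algebra over a field k of characteristic ≠ 2, 3, equipped with a grading O = ⊕_{g∈Z₃²} O_g by the group Z₃² = (Z/3)² such that O_0 = 0 and dim O_g = 1 for every g ≠ 0 (a standard Z₃²-grading). For μ ∈ Z₃² set o(O,n)_μ := {d ∈ o(O,n) : d(O_γ) ⊆ O_{γ+μ} for all γ ∈ Z₃²}. Then o(O,n) = ⊕_{μ∈Z₃²} o(O,n)_μ is a grading of the Lie algebra o(O,n), the component o(O,n)_0 is a 4-dimensional Cartan subalgebra of o(O,n), and dim o(O,n)_μ = 3 for every μ ≠ 0. -/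

import Mathlib

open QuadraticMap

/-!
The composition identity `(x * y) * x = n(x) y` and its linearization
`(x * y) * z + (z * y) * x = n(x, z) y` force `n(O_a, O_c) = 0` unless `a + c = 0`. Hence the
projection `π_g` onto `O_g` has adjoint `π_{-g}`, so the homogeneous components
`∑_g π_{g+μ} d π_g` of a skew `d` are again skew: this is the grading of `o(O, n)`.

With one-dimensional pieces, `n(d x, y) = -n(x, d y)` ties `d : O_g → O_{g+μ}` to
`d : O_{-(g+μ)} → O_{-g}`, so a skew `d` of degree `μ` is determined by its values on one `g` out
of each pair `{g, -(g + μ)}` of distinct elements with `g, g + μ ≠ 0`; at a fixed point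
`g = -(g + μ)` skewness forces `d(O_g) = 0` since `char k ≠ 2`. The rank-two maps
`x ↦ n(e_{-g}, x) e_{g+μ} - n(e_{g+μ}, x) e_{-g}` realise all these values, and there are 4 such
pairs for `μ = 0` and 3 otherwise. Finally `o(O, n)_0` acts diagonally, so it is abelian, and
`π_g - π_{-g} ∈ o(O, n)_0` separates the weight of `O_g` from all others, so `o(O, n)_0` is
self-normalizing.
-/

section HomogeneousEnd

variable {R O G : Type*} [CommSemiring R] [AddCommMonoid O] [Module R O]

def homogeneousEnd [Add G] (A : G → Submodule R O) (μ : G) : Submodule R (Module.End R O) where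
  carrier := {d | ∀ γ, ∀ z ∈ A γ, d z ∈ A (γ + μ)}
  add_mem' hd hd' γ z hz := add_mem (hd γ z hz) (hd' γ z hz)
  zero_mem' _ _ _ := zero_mem _
  smul_mem' c _ hd γ z hz := (A _).smul_mem c (hd γ z hz)

theorem mul_mem_homogeneousEnd [AddCommSemigroup G] {A : G → Submodule R O} {μ ν : G} {d d' : Module.End R O}
    (hd : d ∈ homogeneousEnd A μ) (hd' : d' ∈ homogeneousEnd A ν) :
    d * d' ∈ homogeneousEnd A (μ + ν) := fun γ z hz => by
  simpa only [Module.End.mul_apply, add_comm μ, ← add_assoc] using hd _ _ (hd' γ z hz)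

end HomogeneousEnd

namespace DirectSum.IsInternal

variable {R O G : Type*} [CommSemiring R] [AddCommMonoid O] [Module R O] [DecidableEq G]
  {A : G → Submodule R O}

theorem linearMap_ext {M : Type*} [AddCommMonoid M] [Module R M] (hA : IsInternal A)
    {f f' : O →ₗ[R] M} (h : ∀ g, ∀ x ∈ A g, f x = f' x) : f = f' := by
  ext x
  have hx : x ∈ ⨆ g, A g := hA.submodule_iSup_eq_top ▸ Submodule.mem_top
  refine Submodule.iSup_induction A (motive := fun x => f x = f' x) hx h (by simp) ?_
  intro x y hx hy
  rw [map_add, map_add, hx, hy]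

noncomputable def proj (hA : IsInternal A) (g : G) : Module.End R O :=
  (A g).subtype ∘ₗ component R G (fun g => A g) g ∘ₗ
    (LinearEquiv.ofBijective (coeLinearMap A) hA).symm.toLinearMap

variable (hA : IsInternal A) {g c : G} {x : O}

theorem proj_apply_mem (g : G) (x : O) : hA.proj g x ∈ A g :=
  Submodule.coe_mem _

theorem proj_apply_of_mem (hx : x ∈ A g) : hA.proj g x = x := by
  simp [proj, ← apply_eq_component, hA.ofBijective_coeLinearMap_of_mem hx]

theorem proj_apply_of_mem_of_ne (hx : x ∈ A g) (hgc : g ≠ c) : hA.proj c x = 0 := by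
  simp [proj, ← apply_eq_component, hA.ofBijective_coeLinearMap_of_mem_ne hgc hx]

theorem sum_proj [Fintype G] : ∑ g, hA.proj g = 1 :=
  hA.linearMap_ext fun c x hx => by
    rw [LinearMap.sum_apply, Finset.sum_eq_single c
      (fun g _ hg => hA.proj_apply_of_mem_of_ne hx (Ne.symm hg)) (by simp),
      hA.proj_apply_of_mem hx, Module.End.one_apply]

theorem sum_proj_apply [Fintype G] (x : O) : ∑ g, hA.proj g x = x := by
  rw [← LinearMap.sum_apply, hA.sum_proj, Module.End.one_apply]

theorem mem_of_proj_apply_eq_zero [Fintype G] (h : ∀ c, c ≠ g → hA.proj c x = 0) :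
    x ∈ A g := by
  rw [← hA.sum_proj_apply x, Finset.sum_eq_single g (fun c _ hc => h c hc) (by simp)]
  exact hA.proj_apply_mem g x

variable [AddCommGroup G] [Fintype G]

noncomputable def endComponent (d : Module.End R O) (μ : G) : Module.End R O :=
  ∑ g, hA.proj (g + μ) * d * hA.proj g

variable {d : Module.End R O} {μ γ : G}

theorem endComponent_apply_of_mem (hx : x ∈ A γ) :
    hA.endComponent d μ x = hA.proj (γ + μ) (d x) := by
  rw [endComponent, LinearMap.sum_apply, Finset.sum_eq_single γ
    (fun g _ hg => by simp [hA.proj_apply_of_mem_of_ne hx (Ne.symm hg)]) (by simp)]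
  simp [hA.proj_apply_of_mem hx]

theorem endComponent_mem_homogeneousEnd (d : Module.End R O) (μ : G) :
    hA.endComponent d μ ∈ homogeneousEnd A μ := fun γ z hz => by
  rw [hA.endComponent_apply_of_mem hz]
  exact hA.proj_apply_mem _ _

theorem sum_endComponent (d : Module.End R O) : ∑ μ, hA.endComponent d μ = d :=
  hA.linearMap_ext fun γ x hx => by
    rw [LinearMap.sum_apply, Finset.sum_congr rfl fun μ _ => hA.endComponent_apply_of_mem hx,
      Fintype.sum_equiv (Equiv.addLeft γ) (fun μ => hA.proj (γ + μ) (d x))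
        (fun c => hA.proj c (d x)) fun _ => rfl,
      hA.sum_proj_apply]

theorem endComponent_eq_of_sum_eq {f : G → Module.End R O}
    (hf : ∀ μ, f μ ∈ homogeneousEnd A μ) (hd : ∑ μ, f μ = d) (μ : G) :
    hA.endComponent d μ = f μ :=
  hA.linearMap_ext fun γ x hx => by
    rw [hA.endComponent_apply_of_mem hx, ← hd, LinearMap.sum_apply, map_sum,
      Finset.sum_eq_single μ
        (fun ν _ hν => hA.proj_apply_of_mem_of_ne (hf ν γ x hx) (by simpa using hν)) (by simp),
      hA.proj_apply_of_mem (hf μ γ x hx)]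

end DirectSum.IsInternal

section PolarGraded

variable {R O G : Type*} [CommRing R] [AddCommGroup O] [Module R O] [AddCommGroup G]

def IsPolarGraded (n : QuadraticForm R O) (A : G → Submodule R O) : Prop :=
  ∀ a b, a + b ≠ 0 → ∀ x ∈ A a, ∀ y ∈ A b, polar n x y = 0

/-- The paper's `o(O, n)_μ`. -/
def skewAdjointComponent (n : QuadraticForm R O) (A : G → Submodule R O) (μ : G) :
    Submodule R (Module.End R O) :=
  (polarBilin n).skewAdjointSubmodule ⊓ homogeneousEnd A μ

variable {n : QuadraticForm R O} {A : G → Submodule R O} {d d' : Module.End R O} {μ ν : G}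

theorem mem_skewAdjointSubmodule_polarBilin :
    d ∈ (polarBilin n).skewAdjointSubmodule ↔
      ∀ x y, polar n (d x) y + polar n x (d y) = 0 := by
  simp [LinearMap.IsSkewAdjoint, LinearMap.IsAdjointPair, add_eq_zero_iff_eq_neg]

theorem polar_apply_left_of_mem_skewAdjoint (hd : d ∈ (polarBilin n).skewAdjointSubmodule)
    (x y : O) : polar n (d x) y = -polar n x (d y) :=
  eq_neg_of_add_eq_zero_left (mem_skewAdjointSubmodule_polarBilin.mp hd x y)

theorem mul_sub_mul_mem_skewAdjointComponent (hd : d ∈ skewAdjointComponent n A μ)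
    (hd' : d' ∈ skewAdjointComponent n A ν) :
    d * d' - d' * d ∈ skewAdjointComponent n A (μ + ν) :=
  ⟨Ring.lie_def d d' ▸ LinearMap.BilinForm.isSkewAdjoint_bracket _ hd.1 hd'.1,
    sub_mem (mul_mem_homogeneousEnd hd.2 hd'.2)
      (add_comm ν μ ▸ mul_mem_homogeneousEnd hd'.2 hd.2)⟩

variable [DecidableEq G]

theorem polar_proj_neg_right [Fintype G] (hA : DirectSum.IsInternal A)
    (hn : IsPolarGraded n A) {g : G} {u : O} (hu : u ∈ A g) (y : O) :
    polar n u (hA.proj (-g) y) = polar n u y := by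
  conv_rhs => rw [← hA.sum_proj_apply y, ← polarBilin_apply_apply, map_sum]
  exact (Finset.sum_eq_single (-g)
    (fun b _ hb => hn g b (fun h => hb (eq_neg_of_add_eq_zero_right h)) u hu _
      (hA.proj_apply_mem b y)) (by simp)).symm

theorem isAdjointPair_proj [Fintype G] (hA : DirectSum.IsInternal A) (hn : IsPolarGraded n A)
    (g : G) : LinearMap.IsAdjointPair (polarBilin n) (polarBilin n) (hA.proj g) (hA.proj (-g)) := by
  intro x y
  simp only [polarBilin_apply_apply]
  calc polar n (hA.proj g x) y
      = polar n (hA.proj g x) (hA.proj (-g) y) :=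
        (polar_proj_neg_right hA hn (hA.proj_apply_mem g x) y).symm
    _ = polar n (hA.proj (-g) y) (hA.proj (- -g) x) := by rw [neg_neg, polar_comm]
    _ = polar n x (hA.proj (-g) y) := by
        rw [polar_proj_neg_right hA hn (hA.proj_apply_mem _ y), polar_comm]

theorem proj_mem_homogeneousEnd_zero (hA : DirectSum.IsInternal A) (g : G) :
    hA.proj g ∈ homogeneousEnd A 0 := by
  intro γ z hz
  rw [add_zero]
  rcases eq_or_ne γ g with rfl | hγ
  · exact hA.proj_apply_mem γ z
  · rw [hA.proj_apply_of_mem_of_ne hz hγ]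
    exact zero_mem _

theorem proj_sub_proj_neg_mem_skewAdjointComponent [Fintype G] (hA : DirectSum.IsInternal A)
    (hn : IsPolarGraded n A) (g : G) :
    hA.proj g - hA.proj (-g) ∈ skewAdjointComponent n A 0 := by
  refine Submodule.mem_inf.mpr ⟨?_, sub_mem (proj_mem_homogeneousEnd_zero hA g)
    (proj_mem_homogeneousEnd_zero hA _)⟩
  have h := (isAdjointPair_proj hA hn g).sub (isAdjointPair_proj hA hn (-g))
  rw [neg_neg] at h
  rw [LinearMap.mem_skewAdjointSubmodule, LinearMap.IsSkewAdjoint, ← LinearMap.coe_neg, neg_sub]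
  exact h

theorem endComponent_mem_skewAdjointComponent [Fintype G] (hA : DirectSum.IsInternal A)
    (hn : IsPolarGraded n A) (hd : d ∈ (polarBilin n).skewAdjointSubmodule) (μ : G) :
    hA.endComponent d μ ∈ skewAdjointComponent n A μ := by
  refine Submodule.mem_inf.mpr ⟨?_, hA.endComponent_mem_homogeneousEnd d μ⟩
  rw [LinearMap.mem_skewAdjointSubmodule] at hd ⊢
  have hadj (g : G) : LinearMap.IsAdjointPair (polarBilin n) (polarBilin n)
      (hA.proj (g + μ) * d * hA.proj g) (hA.proj (-g) * (-d) * hA.proj (-(g + μ))) := by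
    simpa only [mul_assoc] using ((isAdjointPair_proj hA hn (g + μ)).mul (f' := d) (g' := -d)
      hd).mul (isAdjointPair_proj hA hn g)
  have hsum : ∑ g, hA.proj (-g) * (-d) * hA.proj (-(g + μ)) = -hA.endComponent d μ := by
    rw [DirectSum.IsInternal.endComponent, ← Finset.sum_neg_distrib]
    refine Fintype.sum_equiv ((Equiv.neg G).trans (Equiv.subRight μ)) _ _ fun g => ?_
    simp only [Equiv.trans_apply, Equiv.neg_apply, Equiv.subRight_apply, sub_add_cancel,
      neg_add', mul_neg, neg_mul]
  rw [LinearMap.IsSkewAdjoint, ← LinearMap.coe_neg, ← hsum]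
  intro x y
  simp only [DirectSum.IsInternal.endComponent, map_sum, LinearMap.sum_apply]
  exact Finset.sum_congr rfl fun g _ => hadj g x y

theorem existsUnique_sum_eq_of_mem_skewAdjoint [Fintype G] (hA : DirectSum.IsInternal A)
    (hn : IsPolarGraded n A) (hd : d ∈ (polarBilin n).skewAdjointSubmodule) :
    ∃! f : G → Module.End R O, (∀ μ, f μ ∈ skewAdjointComponent n A μ) ∧ d = ∑ μ, f μ :=
  ⟨hA.endComponent d,
    ⟨endComponent_mem_skewAdjointComponent hA hn hd, (hA.sum_endComponent d).symm⟩,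
    fun _ hf => funext fun μ => (hA.endComponent_eq_of_sum_eq
      (fun ν => (Submodule.mem_inf.mp (hf.1 ν)).2) hf.2.symm μ).symm⟩

theorem eq_zero_of_forall_polar_eq_zero [Fintype G] (hA : DirectSum.IsInternal A)
    (hn : IsPolarGraded n A) (hsep : (polarBilin n).SeparatingLeft) {c : G} {x : O}
    (hx : x ∈ A c) (h : ∀ y ∈ A (-c), polar n x y = 0) : x = 0 :=
  hsep x fun y => by
    rw [polarBilin_apply_apply, ← polar_proj_neg_right hA hn hx]
    exact h _ (hA.proj_apply_mem _ _)

end PolarGraded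

section SymmetricComposition

variable {R O : Type*} [CommRing R] [AddCommGroup O] [Module R O] {n : QuadraticForm R O}
  {mul : O →ₗ[R] O →ₗ[R] O}

theorem mul_mul_self_eq_smul (hsep : (polarBilin n).SeparatingLeft)
    (hcomp : ∀ x y, n (mul x y) = n x * n y)
    (hassoc : ∀ x y z, polar n (mul x y) z = polar n x (mul y z)) (x y : O) :
    mul (mul x y) x = n x • y := by
  refine sub_eq_zero.mp (hsep _ fun z => ?_)
  rw [polarBilin_apply_apply, polar_sub_left, polar_smul_left, hassoc, smul_eq_mul]
  simp only [polar]
  rw [← map_add (mul x), hcomp, hcomp, hcomp]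
  ring

theorem mul_mul_add_mul_mul_eq_polar_smul (hsep : (polarBilin n).SeparatingLeft)
    (hcomp : ∀ x y, n (mul x y) = n x * n y)
    (hassoc : ∀ x y z, polar n (mul x y) z = polar n x (mul y z)) (x y z : O) :
    mul (mul x y) z + mul (mul z y) x = polar n x z • y := by
  have h := mul_mul_self_eq_smul hsep hcomp hassoc (x + z) y
  simp only [map_add, LinearMap.add_apply, mul_mul_self_eq_smul hsep hcomp hassoc] at h
  rw [polar]
  linear_combination (norm := module) h

end SymmetricComposition

theorem isPolarGraded_of_mul_mem {k O G : Type*} [Field k] [AddCommGroup O] [Module k O]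
    [AddCommGroup G] {n : QuadraticForm k O} {mul : O →ₗ[k] O →ₗ[k] O} {A : G → Submodule k O}
    (hsep : (polarBilin n).SeparatingLeft) (hcomp : ∀ x y, n (mul x y) = n x * n y)
    (hassoc : ∀ x y z, polar n (mul x y) z = polar n x (mul y z)) (hind : iSupIndep A)
    (hmul : ∀ g h, ∀ x ∈ A g, ∀ y ∈ A h, mul x y ∈ A (g + h)) {b : G} {y : O} (hy : y ∈ A b)
    (hy0 : y ≠ 0) : IsPolarGraded n A := by
  intro a c hac x hx z hz
  have hmem : polar n x z • y ∈ A (a + b + c) := by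
    rw [← mul_mul_add_mul_mul_eq_polar_smul hsep hcomp hassoc x y z]
    refine add_mem (hmul _ _ _ (hmul a b x hx y hy) z hz) ?_
    rw [show a + b + c = c + b + a by abel]
    exact hmul _ _ _ (hmul c b z hz y hy) x hx
  have hne : a + b + c ≠ b := fun h => hac (add_eq_right.mp (by rwa [add_right_comm] at h))
  have h0 := Submodule.disjoint_def.mp (hind.pairwiseDisjoint hne) _ hmem ((A b).smul_mem _ hy)
  exact (smul_eq_zero.mp h0).resolve_right hy0

section Wedge

variable {R O G : Type*} [CommRing R] [AddCommGroup O] [Module R O] [AddCommGroup G]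
  {n : QuadraticForm R O} {A : G → Submodule R O} {a b γ : G} {p q z : O}

def wedge (n : QuadraticForm R O) (p q : O) : Module.End R O :=
  (polarBilin n p).smulRight q - (polarBilin n q).smulRight p

theorem wedge_apply (x : O) : wedge n p q x = polar n p x • q - polar n q x • p := by
  simp [wedge, polarBilin_apply_apply]

theorem wedge_mem_skewAdjointSubmodule (p q : O) :
    wedge n p q ∈ (polarBilin n).skewAdjointSubmodule := by
  refine mem_skewAdjointSubmodule_polarBilin.mpr fun x y => ?_
  simp only [wedge_apply, polar_sub_left, polar_sub_right, polar_smul_left, polar_smul_right,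
    smul_eq_mul]
  rw [polar_comm n x p, polar_comm n x q]
  ring

theorem polar_smul_mem (hn : IsPolarGraded n A) (hp : p ∈ A a) (hq : q ∈ A b) (hz : z ∈ A γ) :
    polar n p z • q ∈ A (γ + (a + b)) := by
  by_cases h : a + γ = 0
  · rw [show γ + (a + b) = b by rw [← add_assoc, add_comm γ, h, zero_add]]
    exact (A b).smul_mem _ hq
  · rw [hn a γ h p hp z hz, zero_smul]
    exact zero_mem _

theorem wedge_mem_skewAdjointComponent (hn : IsPolarGraded n A) (hp : p ∈ A a)
    (hq : q ∈ A b) : wedge n p q ∈ skewAdjointComponent n A (a + b) := by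
  refine Submodule.mem_inf.mpr ⟨wedge_mem_skewAdjointSubmodule p q, fun γ z hz => ?_⟩
  rw [wedge_apply]
  exact sub_mem (polar_smul_mem hn hp hq hz) (add_comm a b ▸ polar_smul_mem hn hq hp hz)

theorem wedge_apply_of_add_ne_zero (hn : IsPolarGraded n A) (hq : q ∈ A b) (hz : z ∈ A γ)
    (h : b + γ ≠ 0) : wedge n p q z = polar n p z • q := by
  rw [wedge_apply, hn b γ h q hq z hz, zero_smul, sub_zero]

end Wedge

section LineGrading

variable {k O G : Type*} [Field k] [AddCommGroup O] [Module k O] [AddCommGroup G]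
  {n : QuadraticForm k O} {A : G → Submodule k O} {d : Module.End k O} {γ : G} {x y z : O}

theorem exists_mem_ne_zero_of_finrank_eq_one {p : Submodule k O}
    (h : Module.finrank k p = 1) : ∃ x ∈ p, x ≠ 0 :=
  Submodule.exists_mem_ne_zero_of_ne_bot fun hp => by subst hp; simp at h

theorem exists_smul_eq_of_mem (hzero : A 0 = ⊥) (hone : ∀ g ≠ 0, Module.finrank k (A g) = 1)
    {g : G} (hx : x ∈ A g) (hx0 : x ≠ 0) (hy : y ∈ A g) : ∃ c : k, c • x = y := by
  have hg : g ≠ 0 := by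
    rintro rfl
    rw [hzero, Submodule.mem_bot] at hx
    exact hx0 hx
  obtain ⟨c, hc⟩ := (finrank_eq_one_iff_of_nonzero' (⟨x, hx⟩ : A g)
    (by simpa using hx0)).mp (hone g hg) ⟨y, hy⟩
  exact ⟨c, congrArg Subtype.val hc⟩

theorem polar_apply_self_eq_zero (two : (2 : k) ≠ 0)
    (hd : d ∈ (polarBilin n).skewAdjointSubmodule) (x : O) : polar n (d x) x = 0 := by
  have h := polar_apply_left_of_mem_skewAdjoint hd x x
  rw [polar_comm n x] at h
  exact (mul_eq_zero.mp (by linear_combination h : (2 : k) * polar n (d x) x = 0)).resolve_left two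

variable [DecidableEq G]

theorem mul_comm_of_mem_homogeneousEnd_zero (hA : DirectSum.IsInternal A) (hzero : A 0 = ⊥)
    (hone : ∀ g ≠ 0, Module.finrank k (A g) = 1) {d d' : Module.End k O}
    (hd : d ∈ homogeneousEnd A 0) (hd' : d' ∈ homogeneousEnd A 0) : d * d' = d' * d :=
  hA.linearMap_ext fun g x hx => by
    rcases eq_or_ne x 0 with rfl | hx0
    · simp
    obtain ⟨c, hc⟩ := exists_smul_eq_of_mem hzero hone hx hx0 (add_zero g ▸ hd g x hx)
    obtain ⟨c', hc'⟩ := exists_smul_eq_of_mem hzero hone hx hx0 (add_zero g ▸ hd' g x hx)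
    simp only [Module.End.mul_apply, ← hc, ← hc', map_smul, smul_smul, mul_comm c c']

variable [Fintype G]

theorem polar_ne_zero_of_mem (hA : DirectSum.IsInternal A) (hn : IsPolarGraded n A)
    (hsep : (polarBilin n).SeparatingLeft) (hzero : A 0 = ⊥)
    (hone : ∀ g ≠ 0, Module.finrank k (A g) = 1) (hx : x ∈ A γ) (hx0 : x ≠ 0)
    (hy : y ∈ A (-γ)) (hy0 : y ≠ 0) : polar n x y ≠ 0 := fun h =>
  hx0 <| eq_zero_of_forall_polar_eq_zero hA hn hsep hx fun w hw => by
    obtain ⟨t, rfl⟩ := exists_smul_eq_of_mem hzero hone hy hy0 hw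
    rw [polar_smul_right, h, smul_zero]

theorem mem_of_commutator_proj_sub_proj_neg_mem (hA : DirectSum.IsInternal A)
    (two : (2 : k) ≠ 0) (hγ : -γ ≠ γ)
    (h : d * (hA.proj γ - hA.proj (-γ)) - (hA.proj γ - hA.proj (-γ)) * d ∈ homogeneousEnd A 0)
    (hz : z ∈ A γ) : d z ∈ A γ := by
  have hmem : d z - (hA.proj γ (d z) - hA.proj (-γ) (d z)) ∈ A γ := by
    simpa [hA.proj_apply_of_mem hz, hA.proj_apply_of_mem_of_ne hz hγ.symm] using h γ z hz
  refine hA.mem_of_proj_apply_eq_zero fun c hc => ?_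
  have h0 := hA.proj_apply_of_mem_of_ne hmem (Ne.symm hc)
  rw [map_sub, map_sub, hA.proj_apply_of_mem_of_ne (hA.proj_apply_mem γ _) (Ne.symm hc),
    zero_sub, sub_neg_eq_add] at h0
  rcases eq_or_ne c (-γ) with rfl | hc'
  · rw [hA.proj_apply_of_mem (hA.proj_apply_mem _ _), ← two_smul k] at h0
    exact (smul_eq_zero.mp h0).resolve_left two
  · rwa [hA.proj_apply_of_mem_of_ne (hA.proj_apply_mem _ _) (Ne.symm hc'), add_zero] at h0

theorem mem_homogeneousEnd_zero_of_forall_commutator_mem (hA : DirectSum.IsInternal A)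
    (hn : IsPolarGraded n A) (two : (2 : k) ≠ 0) (hzero : A 0 = ⊥)
    (hG : ∀ g : G, -g = g → g = 0)
    (h : ∀ d' ∈ skewAdjointComponent n A 0, d * d' - d' * d ∈ skewAdjointComponent n A 0) :
    d ∈ homogeneousEnd A 0 := by
  intro γ z hz
  rw [add_zero]
  rcases eq_or_ne γ 0 with rfl | hγ
  · rw [hzero, Submodule.mem_bot] at hz ⊢
    rw [hz, map_zero]
  · exact mem_of_commutator_proj_sub_proj_neg_mem hA two (fun h => hγ (hG γ h))
      (Submodule.mem_inf.mp (h _ (proj_sub_proj_neg_mem_skewAdjointComponent hA hn γ))).2 hz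

end LineGrading

section StandardGrading

/-- One element out of each pair `{g, -(g + μ)}` of distinct elements with `g, g + μ ≠ 0`
(both members of a pair give proportional operators `wedge n (e (-g)) (e (g + μ))`); comparing
`3 * g.1 + g.2` is an arbitrary way to pick it. -/
def pairReps (μ : ZMod 3 × ZMod 3) : Finset (ZMod 3 × ZMod 3) :=
  {g | g ≠ 0 ∧ g + μ ≠ 0 ∧ 3 * g.1.val + g.2.val < 3 * (-(g + μ)).1.val + (-(g + μ)).2.val}

theorem ne_zero_of_mem_pairReps : ∀ {μ g : ZMod 3 × ZMod 3}, g ∈ pairReps μ → g ≠ 0 := by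
  decide

theorem add_ne_zero_of_mem_pairReps :
    ∀ {μ g : ZMod 3 × ZMod 3}, g ∈ pairReps μ → g + μ ≠ 0 := by
  decide

theorem add_add_ne_zero_of_mem_pairReps :
    ∀ {μ g h : ZMod 3 × ZMod 3}, g ∈ pairReps μ → h ∈ pairReps μ → g + μ + h ≠ 0 := by
  decide

theorem pairReps_cover : ∀ μ γ : ZMod 3 × ZMod 3,
    γ = 0 ∨ γ + μ = 0 ∨ -(γ + μ) = γ ∨ γ ∈ pairReps μ ∨ -(γ + μ) ∈ pairReps μ := by
  decide

theorem card_pairReps_zero : (pairReps 0).card = 4 := by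
  decide

theorem card_pairReps_of_ne_zero :
    ∀ {μ : ZMod 3 × ZMod 3}, μ ≠ 0 → (pairReps μ).card = 3 := by
  decide

theorem eq_zero_of_neg_eq_self : ∀ g : ZMod 3 × ZMod 3, -g = g → g = 0 := by
  decide

variable {k O : Type*} [Field k] [AddCommGroup O] [Module k O] {n : QuadraticForm k O}
  {A : ZMod 3 × ZMod 3 → Submodule k O} {μ : ZMod 3 × ZMod 3} {e : ZMod 3 × ZMod 3 → O}
  {g : ZMod 3 × ZMod 3}

theorem eq_zero_of_forall_mem_pairReps (hA : DirectSum.IsInternal A) (hn : IsPolarGraded n A)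
    (hsep : (polarBilin n).SeparatingLeft) (two : (2 : k) ≠ 0) (hzero : A 0 = ⊥)
    (hone : ∀ g ≠ 0, Module.finrank k (A g) = 1) {d : Module.End k O}
    (hd : d ∈ skewAdjointComponent n A μ) (h : ∀ g ∈ pairReps μ, ∀ z ∈ A g, d z = 0) :
    d = 0 := by
  obtain ⟨hskew, hhom⟩ := Submodule.mem_inf.mp hd
  refine hA.linearMap_ext fun γ z hz => ?_
  have hdz : d z ∈ A (γ + μ) := hhom γ z hz
  rw [LinearMap.zero_apply]
  rcases pairReps_cover μ γ with hγ | hγ | hγ | hγ | hγ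
  · rw [hγ, hzero, Submodule.mem_bot] at hz
    rw [hz, map_zero]
  · rwa [hγ, hzero, Submodule.mem_bot] at hdz
  · refine eq_zero_of_forall_polar_eq_zero hA hn hsep hdz fun w hw => ?_
    rcases eq_or_ne z 0 with rfl | hz0
    · rw [map_zero, polar_zero_left]
    obtain ⟨t, rfl⟩ := exists_smul_eq_of_mem hzero hone hz hz0 (hγ ▸ hw)
    rw [polar_smul_right, polar_apply_self_eq_zero two hskew, smul_zero]
  · exact h γ hγ z hz
  · refine eq_zero_of_forall_polar_eq_zero hA hn hsep hdz fun w hw => ?_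
    rw [polar_apply_left_of_mem_skewAdjoint hskew, h _ hγ w hw, polar_zero_right, neg_zero]

theorem sum_smul_wedge_apply_of_mem_pairReps (hn : IsPolarGraded n A) (he : ∀ g, e g ∈ A g)
    (c : pairReps μ → k) (h : pairReps μ) :
    (∑ g, c g • wedge n (e (-g)) (e (g + μ))) (e h) =
      c h • wedge n (e (-h)) (e (h + μ)) (e h) := by
  rw [LinearMap.sum_apply, Finset.sum_eq_single h _ (by simp)]
  · rfl
  intro g _ hgh
  rw [LinearMap.smul_apply, wedge_apply_of_add_ne_zero hn (he _) (he h)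
      (add_add_ne_zero_of_mem_pairReps g.2 h.2),
    hn _ _ (fun h0 => hgh (Subtype.ext (neg_add_eq_zero.mp h0))) _ (he _) _ (he h), zero_smul,
    smul_zero]

theorem wedge_apply_ne_zero_of_mem_pairReps (hA : DirectSum.IsInternal A)
    (hn : IsPolarGraded n A) (hsep : (polarBilin n).SeparatingLeft) (hzero : A 0 = ⊥)
    (hone : ∀ g ≠ 0, Module.finrank k (A g) = 1) (he : ∀ g, e g ∈ A g)
    (he0 : ∀ g ≠ 0, e g ≠ 0) (hg : g ∈ pairReps μ) :
    wedge n (e (-g)) (e (g + μ)) (e g) ≠ 0 := by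
  have hg0 := ne_zero_of_mem_pairReps hg
  rw [wedge_apply_of_add_ne_zero hn (he _) (he g) (add_add_ne_zero_of_mem_pairReps hg hg)]
  exact smul_ne_zero (polar_ne_zero_of_mem hA hn hsep hzero hone (he _)
    (he0 _ (neg_ne_zero.mpr hg0)) (by simpa using he g) (he0 g hg0))
    (he0 _ (add_ne_zero_of_mem_pairReps hg))

theorem finrank_skewAdjointComponent (hA : DirectSum.IsInternal A) (hn : IsPolarGraded n A)
    (hsep : (polarBilin n).SeparatingLeft) (two : (2 : k) ≠ 0) (hzero : A 0 = ⊥)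
    (hone : ∀ g ≠ 0, Module.finrank k (A g) = 1) (μ : ZMod 3 × ZMod 3) :
    Module.finrank k (skewAdjointComponent n A μ) = (pairReps μ).card := by
  have hgen (g : ZMod 3 × ZMod 3) : ∃ x ∈ A g, g ≠ 0 → x ≠ 0 := by
    rcases eq_or_ne g 0 with rfl | hg
    · exact ⟨0, zero_mem _, fun h => absurd rfl h⟩
    · obtain ⟨x, hx, hx0⟩ := exists_mem_ne_zero_of_finrank_eq_one (hone g hg)
      exact ⟨x, hx, fun _ => hx0⟩
  choose e he he0 using hgen
  set E : pairReps μ → Module.End k O := fun g => wedge n (e (-g)) (e (g + μ))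
  have hE (g : pairReps μ) : E g ∈ skewAdjointComponent n A μ := by
    simpa using wedge_mem_skewAdjointComponent hn (he (-g)) (he (g + μ))
  have hEe (g : pairReps μ) : E g (e g) ≠ 0 :=
    wedge_apply_ne_zero_of_mem_pairReps hA hn hsep hzero hone he he0 g.2
  have hli : LinearIndependent k E := Fintype.linearIndependent_iff.mpr fun c hc h => by
    have := sum_smul_wedge_apply_of_mem_pairReps hn he c h
    rw [hc, LinearMap.zero_apply, eq_comm, smul_eq_zero] at this
    exact this.resolve_right (hEe h)
  have hspan : skewAdjointComponent n A μ = Submodule.span k (Set.range E) := by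
    refine le_antisymm (fun d hd => ?_) (Submodule.span_le.mpr (Set.range_subset_iff.mpr hE))
    choose c hc using fun g : pairReps μ => exists_smul_eq_of_mem hzero hone
      ((Submodule.mem_inf.mp (hE g)).2 g (e g) (he g)) (hEe g)
      ((Submodule.mem_inf.mp hd).2 g (e g) (he g))
    have hsum : d - ∑ g, c g • E g = 0 := by
      refine eq_zero_of_forall_mem_pairReps hA hn hsep two hzero hone
        (sub_mem hd (Submodule.sum_mem _ fun g _ => Submodule.smul_mem _ _ (hE g)))
        fun h hh z hz => ?_
      obtain ⟨t, rfl⟩ :=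
        exists_smul_eq_of_mem hzero hone (he h) (he0 h (ne_zero_of_mem_pairReps hh)) hz
      rw [map_smul, LinearMap.sub_apply, sum_smul_wedge_apply_of_mem_pairReps hn he c ⟨h, hh⟩,
        hc, sub_self, smul_zero]
    rw [sub_eq_zero.mp hsum]
    exact Submodule.sum_mem _ fun g _ => Submodule.smul_mem _ _ (Submodule.subset_span ⟨g, rfl⟩)
  rw [hspan, finrank_span_eq_card hli, Fintype.card_coe]

end StandardGrading

theorem okubo_standard_grading_orthogonal_Lie_general
    {k : Type*} [Field k] {O : Type*} [AddCommGroup O] [Module k O]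
    (hchar2 : ringChar k ≠ 2)
    (mul : O →ₗ[k] O →ₗ[k] O) (n : QuadraticForm k O)
    (hnondeg : ∀ x : O, (∀ y : O, polar n x y = 0) → x = 0)
    (hcomp : ∀ x y : O, n (mul x y) = n x * n y)
    (hassoc : ∀ x y z : O, polar n (mul x y) z = polar n x (mul y z))
    (A : ZMod 3 × ZMod 3 → Submodule k O)
    (hdecomp : DirectSum.IsInternal A)
    (hgrmul : ∀ g h : ZMod 3 × ZMod 3, ∀ x ∈ A g, ∀ y ∈ A h, mul x y ∈ A (g + h))
    (hzero : A 0 = ⊥)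
    (hone : ∀ g : ZMod 3 × ZMod 3, g ≠ 0 → Module.finrank k (A g) = 1) :
    ∀ (inO : Module.End k O → Prop)
      (inOmu : (ZMod 3 × ZMod 3) → Module.End k O → Prop),
      (∀ d : Module.End k O,
        inO d ↔ ∀ x y : O, polar n (d x) y + polar n x (d y) = 0) →
      (∀ (μ : ZMod 3 × ZMod 3) (d : Module.End k O),
        inOmu μ d ↔ (inO d ∧ ∀ γ : ZMod 3 × ZMod 3, ∀ z ∈ A γ, d z ∈ A (γ + μ))) →
      ( -- o(O,n) = ⊕_μ o(O,n)_μ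
        (∀ d : Module.End k O, inO d →
          ∃! f : (ZMod 3 × ZMod 3) → Module.End k O,
            (∀ μ, inOmu μ (f μ)) ∧ d = ∑ μ : ZMod 3 × ZMod 3, f μ) ∧
        -- it is a grading of the Lie algebra
        (∀ (μ ν : ZMod 3 × ZMod 3) (d d' : Module.End k O),
          inOmu μ d → inOmu ν d' → inOmu (μ + ν) (d * d' - d' * d)) ∧
        -- o(O,n)_0 is a 4-dimensional Cartan subalgebra
        ((∃ V : Submodule k (Module.End k O),
            (V : Set (Module.End k O)) = {d | inOmu 0 d} ∧
            Module.finrank k V = 4) ∧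
         (∀ d d' : Module.End k O, inOmu 0 d → inOmu 0 d' → d * d' = d' * d) ∧
         (∀ d : Module.End k O, inO d →
            (∀ d' : Module.End k O, inOmu 0 d' → inOmu 0 (d * d' - d' * d)) →
            inOmu 0 d)) ∧
        -- dim o(O,n)_μ = 3 for μ ≠ 0
        (∀ μ : ZMod 3 × ZMod 3, μ ≠ 0 →
          ∃ V : Submodule k (Module.End k O),
            (V : Set (Module.End k O)) = {d | inOmu μ d} ∧
            Module.finrank k V = 3) ) := by
  intro inO inOmu hO hOmu
  have hsep : (polarBilin n).SeparatingLeft := hnondeg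
  have two : (2 : k) ≠ 0 := Ring.two_ne_zero hchar2
  obtain ⟨y, hy, hy0⟩ := exists_mem_ne_zero_of_finrank_eq_one (hone (1, 0) (by decide))
  have hn : IsPolarGraded n A :=
    isPolarGraded_of_mul_mem hsep hcomp hassoc hdecomp.submodule_iSupIndep hgrmul hy hy0
  have hO' (d) : inO d ↔ d ∈ (polarBilin n).skewAdjointSubmodule :=
    (hO d).trans mem_skewAdjointSubmodule_polarBilin.symm
  have hOmu' (μ d) : inOmu μ d ↔ d ∈ skewAdjointComponent n A μ := by
    rw [hOmu, hO']
    rfl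
  have hdim := finrank_skewAdjointComponent hdecomp hn hsep two hzero hone
  simp only [hO', hOmu']
  refine ⟨fun _ => existsUnique_sum_eq_of_mem_skewAdjoint hdecomp hn,
    fun _ _ _ _ => mul_sub_mul_mem_skewAdjointComponent,
    ⟨⟨_, rfl, by rw [hdim, card_pairReps_zero]⟩,
      fun d d' hd hd' => mul_comm_of_mem_homogeneousEnd_zero hdecomp hzero hone
        (Submodule.mem_inf.mp hd).2 (Submodule.mem_inf.mp hd').2,
      fun d hd h => Submodule.mem_inf.mpr ⟨hd, mem_homogeneousEnd_zero_of_forall_commutator_mem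
        hdecomp hn two hzero eq_zero_of_neg_eq_self h⟩⟩,
    fun μ hμ => ⟨_, rfl, by rw [hdim, card_pairReps_of_ne_zero hμ]⟩⟩

/-- a standard ℤ₃²-grading of an Okubo algebra `(O,*,n)`
(char k ≠ 2,3) induces a grading `o(O,n) = ⊕_μ o(O,n)_μ` of the orthogonal
Lie algebra, in which `o(O,n)_0` is a 4-dimensional Cartan subalgebra
(abelian, hence nilpotent, and self-normalizing) and `dim o(O,n)_μ = 3` for
every `μ ≠ 0`. -/
theorem okubo_standard_grading_orthogonal_Lie
    {k : Type*} [Field k] {O : Type*} [AddCommGroup O] [Module k O]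
    (hchar2 : ringChar k ≠ 2) (hchar3 : ringChar k ≠ 3)
    (mul : O →ₗ[k] O →ₗ[k] O) (n : QuadraticForm k O)
    (hnondeg : ∀ x : O, (∀ y : O, polar n x y = 0) → x = 0)
    (hcomp : ∀ x y : O, n (mul x y) = n x * n y)
    (hassoc : ∀ x y z : O, polar n (mul x y) z = polar n x (mul y z))
    (hdim : Module.finrank k O = 8)
    (hnopara : ¬ ∃ e : O, ∀ x : O,
      mul e x = polar n e x • e - x ∧ mul x e = polar n e x • e - x)
    (A : ZMod 3 × ZMod 3 → Submodule k O)
    (hdecomp : DirectSum.IsInternal A)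
    (hgrmul : ∀ g h : ZMod 3 × ZMod 3, ∀ x ∈ A g, ∀ y ∈ A h, mul x y ∈ A (g + h))
    (hzero : A 0 = ⊥)
    (hone : ∀ g : ZMod 3 × ZMod 3, g ≠ 0 → Module.finrank k (A g) = 1) :
    ∀ (inO : Module.End k O → Prop)
      (inOmu : (ZMod 3 × ZMod 3) → Module.End k O → Prop),
      (∀ d : Module.End k O,
        inO d ↔ ∀ x y : O, polar n (d x) y + polar n x (d y) = 0) →
      (∀ (μ : ZMod 3 × ZMod 3) (d : Module.End k O),
        inOmu μ d ↔ (inO d ∧ ∀ γ : ZMod 3 × ZMod 3, ∀ z ∈ A γ, d z ∈ A (γ + μ))) →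
      ( -- o(O,n) = ⊕_μ o(O,n)_μ
        (∀ d : Module.End k O, inO d →
          ∃! f : (ZMod 3 × ZMod 3) → Module.End k O,
            (∀ μ, inOmu μ (f μ)) ∧ d = ∑ μ : ZMod 3 × ZMod 3, f μ) ∧
        -- it is a grading of the Lie algebra
        (∀ (μ ν : ZMod 3 × ZMod 3) (d d' : Module.End k O),
          inOmu μ d → inOmu ν d' → inOmu (μ + ν) (d * d' - d' * d)) ∧
        -- o(O,n)_0 is a 4-dimensional Cartan subalgebra
        ((∃ V : Submodule k (Module.End k O),
            (V : Set (Module.End k O)) = {d | inOmu 0 d} ∧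
            Module.finrank k V = 4) ∧
         (∀ d d' : Module.End k O, inOmu 0 d → inOmu 0 d' → d * d' = d' * d) ∧
         (∀ d : Module.End k O, inO d →
            (∀ d' : Module.End k O, inOmu 0 d' → inOmu 0 (d * d' - d' * d)) →
            inOmu 0 d)) ∧
        -- dim o(O,n)_μ = 3 for μ ≠ 0
        (∀ μ : ZMod 3 × ZMod 3, μ ≠ 0 →
          ∃ V : Submodule k (Module.End k O),
            (V : Set (Module.End k O)) = {d | inOmu μ d} ∧
            Module.finrank k V = 3) ) :=
  okubo_standard_grading_orthogonal_Lie_general hchar2 mul n hnondeg hcomp hassoc A hdecomp hgrmul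
    hzero hone
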